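/- arXiv:1104.4978 — 2 statements merged into one kernel-verified Lean document; each statement's English description precedes it below -/
import Mathlib

section
/- For all natural numbers n, e^{-1} - e^{-1 - e^{-n}} ≤ 1 - e^{-e^{-(n+1)}}. -/
theorem exp_gap_ineq (n : ℕ) :
    Real.exp (-1) - Real.exp (-1 - Real.exp (-(n : ℝ))) ≤
      1 - Real.exp (-Real.exp (-((n : ℝ) + 1))) := by
  set b := Real.exp (-((n : ℝ) + 1)) with hb
  set t := Real.exp (-b) with ht
  have hb0 : 0 < b := Real.exp_pos _
  have ht0 : 0 < t := Real.exp_pos _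
  have h1 : Real.exp (-(n : ℝ)) = Real.exp 1 * b := by
    rw [hb, ← Real.exp_add]; ring_nf
  have h2 : Real.exp (-1 - Real.exp (-(n : ℝ)))
      = Real.exp (-1) * Real.exp (-Real.exp (-(n : ℝ))) := by
    rw [← Real.exp_add]; congr 1
  have hpow : Real.exp (-Real.exp (-(n : ℝ))) = t ^ (Real.exp 1) := by
    rw [h1]
    rw [Real.rpow_def_of_pos ht0, ht, Real.log_exp]; ring_nf
  -- Bernoulli: 1 + e * (t - 1) ≤ t ^ e
  have hs : (-1 : ℝ) ≤ t - 1 := by linarith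
  have hp : (1 : ℝ) ≤ Real.exp 1 := by
    linarith [Real.add_one_le_exp (1 : ℝ)]
  have hbern := one_add_mul_self_le_rpow_one_add hs hp
  rw [show (1 : ℝ) + (t - 1) = t by ring] at hbern
  -- so 1 - t^e ≤ e * (1 - t), hence exp(-1)*(1 - t^e) ≤ 1 - t
  have key : Real.exp (-1) * (1 - t ^ (Real.exp 1)) ≤ 1 - t := by
    have he : Real.exp (-1) * Real.exp 1 = 1 := by
      rw [← Real.exp_add]; simp
    nlinarith [Real.exp_pos (-1 : ℝ)]
  rw [h2, hpow]
  linarith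
end

section
/- Let Q be a finite set of states and let w = q_0 q_1 … q_n be a finite sequence of states together with counter values c_0, c_1, …, c_n ∈ ℤ with |c_{i+1} − c_i| ≤ 1, such that (i) c_i > c_0 for all 0 < i < n, and (ii) whenever 0 ≤ t < t' ≤ n and q_t = q_{t'}, then c_t > c_{t'}. Then n ≤ |Q|² and max_{0 ≤ i ≤ n} c_i − c_0 ≤ |Q|. -/
private lemma value_bound_aux {Q : Type*} [Fintype Q] (n : ℕ) (q : ℕ → Q) (c : ℕ → ℤ)
    (hstep : ∀ i < n, |c (i + 1) - c i| ≤ 1)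
    (hdec : ∀ t t', t < t' → t' ≤ n → q t = q t' → c t' < c t) :
    ∀ i ≤ n, c i - c 0 ≤ (Fintype.card Q : ℤ) := by
  intro i hi
  by_contra hcon
  push_neg at hcon
  set k := Fintype.card Q with hk
  have hex : ∀ ℓ : Fin (k + 1), ∃ t, c 0 + (ℓ : ℕ) + 1 ≤ c t := by
    intro ℓ
    refine ⟨i, ?_⟩
    have := ℓ.isLt
    omega
  let f : Fin (k + 1) → ℕ := fun ℓ => Nat.find (hex ℓ)
  have hfspec : ∀ ℓ : Fin (k + 1), c 0 + (ℓ : ℕ) + 1 ≤ c (f ℓ) := fun ℓ => Nat.find_spec (hex ℓ)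
  have hfle : ∀ ℓ : Fin (k + 1), f ℓ ≤ i := by
    intro ℓ
    apply Nat.find_le
    have := ℓ.isLt
    omega
  have hfpos : ∀ ℓ : Fin (k + 1), 0 < f ℓ := by
    intro ℓ
    rcases Nat.eq_zero_or_pos (f ℓ) with h0 | h
    · have := hfspec ℓ
      rw [h0] at this
      omega
    · exact h
  have hfval : ∀ ℓ : Fin (k + 1), c (f ℓ) = c 0 + (ℓ : ℕ) + 1 := by
    intro ℓ
    have hspec := hfspec ℓ
    have hmin : ¬ (c 0 + (ℓ : ℕ) + 1 ≤ c (f ℓ - 1)) :=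
      Nat.find_min (hex ℓ) (show f ℓ - 1 < f ℓ by have := hfpos ℓ; omega)
    have hstep' := hstep (f ℓ - 1) (by have := hfle ℓ; have := hfpos ℓ; omega)
    rw [Nat.sub_add_cancel (hfpos ℓ)] at hstep'
    have := abs_le.mp hstep'
    omega
  have key : ∀ a b : Fin (k + 1), (a : ℕ) < (b : ℕ) → q (f a) = q (f b) → False := by
    intro a b hab hq
    have h1 : f a ≤ f b := by
      apply Nat.find_le
      have := hfval b
      omega
    have h2 : f a ≠ f b := by
      intro h
      have ha := hfval a
      have hb := hfval b
      rw [h] at ha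
      omega
    have h3 : f a < f b := lt_of_le_of_ne h1 h2
    have := hdec (f a) (f b) h3 (le_trans (hfle b) hi) hq
    have ha := hfval a
    have hb := hfval b
    omega
  obtain ⟨a, b, hab, hqab⟩ :=
    Fintype.exists_ne_map_eq_of_card_lt (fun ℓ : Fin (k + 1) => q (f ℓ))
      (by simp; omega)
  have hvne : (a : ℕ) ≠ (b : ℕ) := by
    intro h
    exact hab (Fin.ext h)
  rcases Nat.lt_or_ge (a : ℕ) (b : ℕ) with h | h
  · exact key a b h hqab
  · exact key b a (by omega) hqab.symm

theorem short_decreasing_path_bound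
    {Q : Type*} [Fintype Q] (n : ℕ) (q : ℕ → Q) (c : ℕ → ℤ)
    (hstep : ∀ i < n, |c (i + 1) - c i| ≤ 1)
    (habove : ∀ i, 0 < i → i < n → c 0 < c i)
    (hdec : ∀ t t', t < t' → t' ≤ n → q t = q t' → c t' < c t) :
    n ≤ (Fintype.card Q) ^ 2 ∧ ∀ i ≤ n, c i - c 0 ≤ (Fintype.card Q : ℤ) := by
  classical
  have hval := value_bound_aux n q c hstep hdec
  refine ⟨?_, hval⟩
  rcases Nat.eq_zero_or_pos n with rfl | hn
  · exact Nat.zero_le _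
  set k := Fintype.card Q with hk
  have hk1 : 1 ≤ k := Fintype.card_pos_iff.mpr ⟨q 0⟩
  set S : Finset (Q × ℤ) :=
    insert (q 0, c 0) ((Finset.univ.erase (q 0)) ×ˢ Finset.Icc (c 0 + 1) (c 0 + k)) with hS
  have hmaps : ∀ t ∈ Finset.range n, (q t, c t) ∈ S := by
    intro t ht
    simp only [Finset.mem_range] at ht
    rcases Nat.eq_zero_or_pos t with rfl | htpos
    · exact Finset.mem_insert_self _ _
    · apply Finset.mem_insert_of_mem
      rw [Finset.mem_product]
      constructor
      · rw [Finset.mem_erase]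
        refine ⟨?_, Finset.mem_univ _⟩
        intro hq0
        have h1 := hdec 0 t htpos (le_of_lt ht) hq0.symm
        have h2 := habove t htpos ht
        omega
      · rw [Finset.mem_Icc]
        have h1 := habove t htpos ht
        have h2 := hval t (le_of_lt ht)
        omega
  have hinj : Set.InjOn (fun t => (q t, c t)) (Finset.range n) := by
    intro t ht t' ht' heq
    simp only [Finset.coe_range, Set.mem_Iio] at ht ht'
    simp only [Prod.mk.injEq] at heq
    by_contra hne
    rcases Nat.lt_or_ge t t' with h | h
    · exact absurd heq.2 ((hdec t t' h (by omega) heq.1).ne')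
    · exact absurd heq.2.symm ((hdec t' t (by omega) (by omega) heq.1.symm).ne')
  have hcard : n ≤ S.card := by
    calc n = (Finset.range n).card := (Finset.card_range n).symm
    _ ≤ S.card := Finset.card_le_card_of_injOn _ hmaps hinj
  have hScard : S.card ≤ 1 + (k - 1) * k := by
    calc S.card ≤ ((Finset.univ.erase (q 0)) ×ˢ Finset.Icc (c 0 + 1) (c 0 + (k : ℤ))).card + 1 :=
          Finset.card_insert_le _ _
    _ = (k - 1) * k + 1 := by
        rw [Finset.card_product, Finset.card_erase_of_mem (Finset.mem_univ _),
          Finset.card_univ, Int.card_Icc]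
        have h : (c 0 + (k : ℤ) + 1 - (c 0 + 1)).toNat = k := by omega
        rw [h]
    _ = 1 + (k - 1) * k := by omega
  have hfin : 1 + (k - 1) * k ≤ k ^ 2 := by
    obtain ⟨m, hm⟩ := Nat.exists_eq_add_of_le hk1
    rw [hm, Nat.add_sub_cancel_left]
    nlinarith
  exact le_trans hcard (le_trans hScard hfin)
end
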